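/- Suppose a linear functional I(P) = ∑_{x} ∑_{r=0}^{ℓ-1} β(r,x) · P([∑ᵢaᵢ]_ℓ = r | x) on n-partite correlations, depending only on full-correlation functions, satisfies I(P) ≤ B for all k-producible Svetlichny correlations P (convex combinations of products of arbitrary normalized at-most-k-partite distributions over partitions into groups of size ≤ k), and that some k-producible Svetlichny correlation attains I(P) = B. Then: (i) I(Q) ≤ B for all k-producible non-signaling correlations Q, and (ii) some k-producible non-signaling correlation Q attains I(Q) = B. -/

import Mathlib

/-- The marginal on a subset `S` of parties. -/
noncomputable def marg {I : Type} [Fintype I] [DecidableEq I] {X A : Type} [Fintype A]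
    [DecidableEq A] (P : (I → X) → (I → A) → ℝ) (S : Finset I)
    (x : I → X) (b : I → A) : ℝ :=
  ∑ a : I → A, if ∀ j ∈ S, a j = b j then P x a else 0

/-- Non-signaling: every marginal is independent of the complementary inputs. -/
def NonSignaling {I : Type} [Fintype I] [DecidableEq I] {X A : Type} [Fintype A]
    [DecidableEq A] (P : (I → X) → (I → A) → ℝ) : Prop :=
  ∀ (S : Finset I) (x x' : I → X), (∀ j ∈ S, x j = x' j) →
    ∀ b : I → A, marg P S x b = marg P S x' b

/-- `k`-producible Svetlichny correlations: convex mixtures, over partitions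
into groups of size at most `k`, of products of arbitrary normalized
(nonnegative) distributions on the groups. -/
def kProducibleSvet {n : ℕ} {X A : Type} [Fintype A]
    (k : ℕ) (P : (Fin n → X) → (Fin n → A) → ℝ) : Prop :=
  ∃ (N : ℕ) (q : Fin N → ℝ) (G : Fin N → ℕ) (g : ∀ l, Fin n → Fin (G l))
    (Q : ∀ (l : Fin N) (i : Fin (G l)),
      ({j : Fin n // g l j = i} → X) → ({j : Fin n // g l j = i} → A) → ℝ),
    (∀ l, 0 ≤ q l) ∧ (∑ l, q l = 1) ∧
    (∀ l i, Fintype.card {j : Fin n // g l j = i} ≤ k) ∧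
    (∀ l i, (∀ x a, 0 ≤ Q l i x a) ∧ (∀ x, ∑ a, Q l i x a = 1)) ∧
    (∀ x a, P x a = ∑ l, q l * ∏ i, Q l i (fun j => x j.1) (fun j => a j.1))

/-- `k`-producible non-signaling correlations: as above, but each group's
distribution is additionally non-signaling. -/
def kProducibleNS {n : ℕ} {X A : Type} [Fintype A] [DecidableEq A]
    (k : ℕ) (P : (Fin n → X) → (Fin n → A) → ℝ) : Prop :=
  ∃ (N : ℕ) (q : Fin N → ℝ) (G : Fin N → ℕ) (g : ∀ l, Fin n → Fin (G l))
    (Q : ∀ (l : Fin N) (i : Fin (G l)),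
      ({j : Fin n // g l j = i} → X) → ({j : Fin n // g l j = i} → A) → ℝ),
    (∀ l, 0 ≤ q l) ∧ (∑ l, q l = 1) ∧
    (∀ l i, Fintype.card {j : Fin n // g l j = i} ≤ k) ∧
    (∀ l i, (∀ x a, 0 ≤ Q l i x a) ∧ (∀ x, ∑ a, Q l i x a = 1) ∧
      NonSignaling (Q l i)) ∧
    (∀ x a, P x a = ∑ l, q l * ∏ i, Q l i (fun j => x j.1) (fun j => a j.1))

/-!
For (i), a `k`-producible non-signaling correlation is in particular a `k`-producible Svetlichny
correlation. For (ii), replace every group distribution of a maximizer by its depolarization,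
which spreads the weight of each class `{a | ∑ j, a j = s}` uniformly over that class. This keeps
the group's full-correlation function, and it is non-signaling: all classes have the same size, so
every proper marginal is independent of the inputs. Since the full-correlation function of a product
over groups is the convolution of those of the groups, and the functional only depends on
full-correlation functions, the value `B` is still attained.
-/

open Finset

namespace FullCorrelation

variable {J A : Type} [Fintype J] [DecidableEq J] [AddCommGroup A] [Fintype A]

/-- Translating the coordinate `j₀` by `t` shifts `∑ j, a j` by `t`, so a set invariant under these
translations meets every level set of `∑ j, a j` equally often. -/
lemma card_smul_sum_comp_sum {M : Type} [AddCommMonoid M] {T : Finset (J → A)} (j₀ : J)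
    (hT : ∀ a ∈ T, ∀ t, a + Pi.single j₀ t ∈ T) (φ : A → M) :
    Fintype.card A • ∑ a ∈ T, φ (∑ j, a j) = #T • ∑ s, φ s := by
  have shift : ∀ t, ∑ a ∈ T, φ (∑ j, a j) = ∑ a ∈ T, φ (t + ∑ j, a j) := by
    intro t
    refine sum_nbij' (· + Pi.single j₀ (-t)) (· + Pi.single j₀ t) (fun a ha => hT a ha (-t))
      (fun a ha => hT a ha t) (fun a _ => ?_) (fun a _ => ?_) (fun a _ => ?_)
    · simp [add_assoc, ← Pi.single_add]
    · simp [add_assoc, ← Pi.single_add]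
    · simp [sum_add_distrib]
  calc Fintype.card A • ∑ a ∈ T, φ (∑ j, a j)
      = ∑ t : A, ∑ a ∈ T, φ (t + ∑ j, a j) := by
        rw [← card_univ, ← sum_const, sum_congr rfl fun t _ => shift t]
    _ = ∑ a ∈ T, ∑ s, φ s := by
        rw [sum_comm]
        exact sum_congr rfl fun a _ => Equiv.sum_comp (Equiv.addRight _) φ
    _ = #T • ∑ s, φ s := sum_const _

variable [DecidableEq A]

variable (J) in
def sumFiber (s : A) : Finset (J → A) := {a | ∑ j, a j = s}

def fullCorr (p : (J → A) → ℝ) (s : A) : ℝ := ∑ a ∈ sumFiber J s, p a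

noncomputable def depolarize (p : (J → A) → ℝ) (a : J → A) : ℝ :=
  fullCorr p (∑ j, a j) / #(sumFiber J (∑ j, a j))

lemma mem_sumFiber {s : A} {a : J → A} : a ∈ sumFiber J s ↔ ∑ j, a j = s := by
  simp [sumFiber]

lemma sum_fullCorr (p : (J → A) → ℝ) : ∑ s, fullCorr p s = ∑ a, p a := by
  simpa [fullCorr, sumFiber] using sum_fiberwise univ (fun a : J → A => ∑ j, a j) p

lemma fullCorr_depolarize (p : (J → A) → ℝ) (s : A) :
    fullCorr (depolarize p) s = fullCorr p s := by
  rcases (sumFiber J s).eq_empty_or_nonempty with h | h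
  · simp [fullCorr, h]
  have : ∀ a ∈ sumFiber J s, depolarize p a = fullCorr p s / #(sumFiber J s) := by
    intro a ha
    rw [depolarize, mem_sumFiber.1 ha]
  rw [fullCorr, sum_congr rfl this, sum_const, nsmul_eq_mul,
    mul_div_cancel₀ _ (Nat.cast_ne_zero.2 h.card_pos.ne')]

lemma depolarize_nonneg {p : (J → A) → ℝ} (hp : ∀ a, 0 ≤ p a) (a : J → A) :
    0 ≤ depolarize p a :=
  div_nonneg (sum_nonneg fun b _ => hp b) (Nat.cast_nonneg _)

lemma sum_depolarize (p : (J → A) → ℝ) : ∑ a, depolarize p a = ∑ a, p a := by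
  simp only [← sum_fullCorr, fullCorr_depolarize]

lemma card_mul_card_sumFiber (j₀ : J) (s : A) :
    Fintype.card A * #(sumFiber J s) = Fintype.card A ^ Fintype.card J := by
  have := card_smul_sum_comp_sum (T := univ) j₀ (fun _ _ _ => mem_univ _)
    (fun t => if t = s then 1 else 0)
  simpa [sum_boole, sumFiber] using this

lemma nonSignaling_depolarize {X : Type} (Q : (J → X) → (J → A) → ℝ)
    (hQ : ∀ x, ∑ a, Q x a = 1) : NonSignaling fun x => depolarize (Q x) := by
  intro S x x' hx b
  by_cases hS : ∀ j, j ∈ S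
  · rw [show x = x' from funext fun j => hx j (hS j)]
  push Not at hS
  obtain ⟨j₀, hj₀⟩ := hS
  set T : Finset (J → A) := {a | ∀ j ∈ S, a j = b j}
  have hT : ∀ a ∈ T, ∀ t, a + Pi.single j₀ t ∈ T := by
    intro a ha t
    simp only [T, mem_filter, mem_univ, true_and] at ha ⊢
    intro j hj
    simp [Pi.single_eq_of_ne (ne_of_mem_of_not_mem hj hj₀), ha j hj]
  have hcard : ∀ s : A, #(sumFiber J s) = #(sumFiber J (0 : A)) := fun s =>
    Nat.eq_of_mul_eq_mul_left Fintype.card_pos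
      ((card_mul_card_sumFiber j₀ s).trans (card_mul_card_sumFiber j₀ (0 : A)).symm)
  have key : ∀ y, (Fintype.card A : ℝ) * marg (fun x => depolarize (Q x)) S y b
      = #T / #(sumFiber J (0 : A)) := by
    intro y
    rw [marg, ← sum_filter, ← nsmul_eq_mul]
    unfold depolarize
    rw [card_smul_sum_comp_sum j₀ hT fun s => fullCorr (Q y) s / #(sumFiber J s)]
    simp only [hcard, ← sum_div, sum_fullCorr, hQ, nsmul_eq_mul, mul_one_div]
  exact mul_left_cancel₀ (Nat.cast_ne_zero.2 Fintype.card_ne_zero) ((key x).trans (key x').symm)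

variable {G : Type} [Fintype G] [DecidableEq G]

def restrictFibers (g : J → G) : (J → A) ≃ ∀ i : G, {j // g j = i} → A where
  toFun a i j := a j
  invFun b j := b (g j) ⟨j, rfl⟩
  left_inv _ := rfl
  right_inv b := by
    funext i ⟨j, hj⟩
    subst hj
    rfl

lemma fullCorr_prod_restrict (g : J → G) (F : ∀ i : G, ({j // g j = i} → A) → ℝ) (r : A) :
    fullCorr (fun a : J → A => ∏ i, F i fun j => a j) r
      = ∑ s ∈ sumFiber G r, ∏ i, fullCorr (F i) (s i) := by
  set B : Finset (∀ i : G, {j // g j = i} → A) := {b | ∑ i, ∑ j, b i j = r}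
  have hLHS : fullCorr (fun a : J → A => ∏ i, F i fun j => a j) r = ∑ b ∈ B, ∏ i, F i (b i) := by
    refine sum_equiv (restrictFibers g) (fun a => ?_) fun _ _ => rfl
    simp [B, mem_sumFiber, restrictFibers, Fintype.sum_fiberwise g a]
  have hfiber : ∀ s ∈ sumFiber G r,
      {b ∈ B | (fun i => ∑ j, b i j) = s} = Fintype.piFinset fun i => sumFiber _ (s i) := by
    intro s hs
    ext b
    simp only [B, mem_filter, mem_univ, true_and, Fintype.mem_piFinset, mem_sumFiber,
      ← mem_sumFiber.1 hs, funext_iff]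
    constructor
    · exact fun h => h.2
    · exact fun h => ⟨sum_congr rfl fun i _ => h i, h⟩
  simp_rw [hLHS, fullCorr, prod_univ_sum]
  rw [← sum_fiberwise_of_maps_to (s := B) (t := sumFiber G r) (g := fun b i => ∑ j, b i j)
    (fun b hb => by simpa [B, mem_sumFiber] using hb)]
  exact sum_congr rfl fun s hs => by rw [hfiber s hs]

lemma fullCorr_sum_mul {ι : Type} [Fintype ι] (q : ι → ℝ) (p : ι → (J → A) → ℝ) (s : A) :
    fullCorr (fun a => ∑ l, q l * p l a) s = ∑ l, q l * fullCorr (p l) s := by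
  simp only [fullCorr, mul_sum]
  exact sum_comm

end FullCorrelation

open Finset FullCorrelation

lemma kProducibleNS.kProducibleSvet {n k : ℕ} {X A : Type} [Fintype A] [DecidableEq A]
    {P : (Fin n → X) → (Fin n → A) → ℝ} (hP : kProducibleNS k P) : kProducibleSvet k P :=
  let ⟨N, q, G, g, Q, hq0, hq1, hcard, hQ, hP⟩ := hP
  ⟨N, q, G, g, Q, hq0, hq1, hcard, fun l i => ⟨(hQ l i).1, (hQ l i).2.1⟩, hP⟩

lemma kProducibleSvet.exists_kProducibleNS_fullCorr_eq {n k : ℕ} {X A : Type} [AddCommGroup A]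
    [Fintype A] [DecidableEq A] {P : (Fin n → X) → (Fin n → A) → ℝ} (hP : kProducibleSvet k P) :
    ∃ P', kProducibleNS k P' ∧ ∀ x, fullCorr (P' x) = fullCorr (P x) := by
  obtain ⟨N, q, G, g, R, hq0, hq1, hcard, hR, hP⟩ := hP
  refine ⟨fun x a => ∑ l, q l * ∏ i, depolarize (R l i fun j => x j) fun j => a j,
    ⟨N, q, G, g, fun l i y => depolarize (R l i y), hq0, hq1, hcard, fun l i =>
      ⟨fun y => depolarize_nonneg ((hR l i).1 y), fun y => (sum_depolarize _).trans ((hR l i).2 y),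
        nonSignaling_depolarize _ (hR l i).2⟩, fun _ _ => rfl⟩, fun x => ?_⟩
  funext r
  rw [show P x = _ from funext (hP x), fullCorr_sum_mul, fullCorr_sum_mul]
  simp only [fullCorr_prod_restrict, fullCorr_depolarize]

/-- a linear functional of the full-correlation functions that
is bounded by `B` on all `k`-producible Svetlichny correlations and attains
`B` on one of them, is (i) bounded by `B` on all `k`-producible non-signaling
correlations and (ii) attains `B` on one of them. -/
theorem stmt_17 {n ℓ : ℕ} [NeZero ℓ] {X : Type} [Fintype X] (k : ℕ)
    (β : Fin ℓ → (Fin n → X) → ℝ) (B : ℝ)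
    (Ifun : ((Fin n → X) → (Fin n → Fin ℓ) → ℝ) → ℝ)
    (hI : ∀ P, Ifun P = ∑ x : Fin n → X, ∑ r : Fin ℓ,
      β r x * ∑ a : Fin n → Fin ℓ, if (∑ i, a i) = r then P x a else 0)
    (hub : ∀ P : (Fin n → X) → (Fin n → Fin ℓ) → ℝ,
      kProducibleSvet k P → Ifun P ≤ B)
    (hattain : ∃ P : (Fin n → X) → (Fin n → Fin ℓ) → ℝ,
      kProducibleSvet k P ∧ Ifun P = B) :
    (∀ Q : (Fin n → X) → (Fin n → Fin ℓ) → ℝ,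
      kProducibleNS k Q → Ifun Q ≤ B) ∧
    (∃ Q : (Fin n → X) → (Fin n → Fin ℓ) → ℝ,
      kProducibleNS k Q ∧ Ifun Q = B) := by
  have hI_fullCorr : ∀ P, Ifun P = ∑ x, ∑ r, β r x * fullCorr (P x) r := fun P => by
    simp only [hI, fullCorr, sumFiber, sum_filter]
  refine ⟨fun Q hQ => hub Q hQ.kProducibleSvet, ?_⟩
  obtain ⟨P, hP, hPB⟩ := hattain
  obtain ⟨Q, hQ, hQP⟩ := hP.exists_kProducibleNS_fullCorr_eq
  exact ⟨Q, hQ, by simp only [hI_fullCorr, hQP, ← hPB]⟩
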